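/- For every natural number n ≥ 6 there exist at least two BCK-algebras of order n (i.e., two BCK-algebra structures on an n-element set that are not isomorphic as BCK-algebras) each of which contains elements x, y whose BCK-sequences cannot be prolonged. -/

import Mathlib

/-
Two BCK-algebras on six elements are written down as Cayley tables; in each, a pair of
elements has BCK-sequences that already fail to be prolonged at step 3. They are enlarged to
`n` elements by adjoining `n - 6` atoms (`a·b = a` for distinct atoms, `a·x = a` and
`x·a = x` against the old elements). The old algebra is a subalgebra of the enlargement, so the
failing sequences survive. The number of elements `x` with some `x·w ∉ {0, x}` is an
isomorphism invariant; atoms never have this property, and the two tables have 2 and 4 such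
elements, so the enlargements are not isomorphic.
-/

/-- A BCK-algebra structure on a set `X`: a binary operation `op` and a
constant `zero` satisfying the five BCK axioms. -/
structure BCK (X : Type*) where
  op : X → X → X
  zero : X
  ax1 : ∀ x y z : X, op (op (op x y) (op z y)) (op x z) = zero
  ax2 : ∀ x y : X, op (op x (op x y)) y = zero
  ax3 : ∀ x : X, op x zero = x
  ax4 : ∀ x : X, op zero x = zero
  ax5 : ∀ x y : X, op x y = zero → op y x = zero → x = y

/-- The pair of BCK-sequences `(x_k, y_k)` determined by starting elements
`x, y`:  `x_0 = x`, `y_0 = y`, `x_1 = y·(y·x)`, `y_1 = x·(x·y)`, and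
`x_k = x_{k-2}·(x_{k-2}·x_{k-1})`, `y_k = y_{k-2}·(y_{k-2}·y_{k-1})` for `k ≥ 2`. -/
def bckPair {X : Type*} (op : X → X → X) (x y : X) : ℕ → X × X
  | 0 => (x, y)
  | 1 => (op y (op y x), op x (op x y))
  | k + 2 =>
      (op (bckPair op x y k).1 (op (bckPair op x y k).1 (bckPair op x y (k + 1)).1),
       op (bckPair op x y k).2 (op (bckPair op x y k).2 (bckPair op x y (k + 1)).2))

/-- The BCK-sequences of `x` and `y` cannot be prolonged: it fails that
`x_{k+1} ≤ y_k` and `y_{k+1} ≤ x_k` hold for every `k ≥ 0` (where `a ≤ b`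
is the BCK-order, i.e. `a·b = 0`). -/
def cannotProlong {X : Type*} (A : BCK X) (x y : X) : Prop :=
  ¬ (∀ k : ℕ, A.op (bckPair A.op x y (k + 1)).1 (bckPair A.op x y k).2 = A.zero ∧
      A.op (bckPair A.op x y (k + 1)).2 (bckPair A.op x y k).1 = A.zero)

namespace BCK

variable {X Y : Type*}

attribute [simp] ax3 ax4

@[simp] theorem op_self (A : BCK X) (x : X) : A.op x x = A.zero := by
  simpa using A.ax2 x A.zero

theorem op_op_self (A : BCK X) (x y : X) : A.op (A.op x y) x = A.zero := by
  simpa using A.ax1 x y A.zero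

theorem map_zero {A : BCK X} {B : BCK Y} {f : X → Y}
    (hf : ∀ x y, f (A.op x y) = B.op (f x) (f y)) : f A.zero = B.zero := by
  rw [← A.op_self A.zero, hf, B.op_self]

theorem bckPair_map {op : X → X → X} {op' : Y → Y → Y} {f : X → Y}
    (hf : ∀ x y, f (op x y) = op' (f x) (f y)) (x y : X) (k : ℕ) :
    bckPair op' (f x) (f y) k = Prod.map f f (bckPair op x y k) := by
  induction k using Nat.strong_induction_on with
  | _ k ih =>
    match k, ih with
    | 0, _ => rfl
    | 1, _ => simp [bckPair, hf]
    | k + 2, ih => simp [bckPair, hf, ih k (by omega), ih (k + 1) (by omega)]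

theorem _root_.cannotProlong.map {A : BCK X} {B : BCK Y} {f : X → Y}
    (hf : ∀ x y, f (A.op x y) = B.op (f x) (f y)) (hinj : f.Injective) {x y : X}
    (h : cannotProlong A x y) : cannotProlong B (f x) (f y) := by
  intro hB
  refine h fun k => ?_
  simpa only [bckPair_map hf, Prod.map_fst, Prod.map_snd, ← hf, ← map_zero hf,
    hinj.eq_iff] using hB k

def nonRigid (A : BCK X) : Set X :=
  {x | ∃ w, A.op x w ≠ A.zero ∧ A.op x w ≠ x}

theorem ncard_nonRigid_congr {A : BCK X} {B : BCK Y} (φ : X ≃ Y)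
    (hφ : ∀ x y, φ (A.op x y) = B.op (φ x) (φ y)) :
    (nonRigid A).ncard = (nonRigid B).ncard := by
  have hmem : ∀ x, φ x ∈ nonRigid B ↔ x ∈ nonRigid A := by
    intro x
    simp only [nonRigid, Set.mem_ofPred_eq, φ.surjective.exists, ← hφ, ← map_zero hφ,
      φ.injective.ne_iff]
  rw [← Set.ncard_image_of_injective _ φ.injective]
  congr 1
  ext y
  obtain ⟨x, rfl⟩ := φ.surjective y
  rw [φ.injective.mem_set_image, hmem]

section AdjoinAtoms

variable [DecidableEq Y]

def atomsOp (A : BCK X) : X ⊕ Y → X ⊕ Y → X ⊕ Y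
  | .inl a, .inl b => .inl (A.op a b)
  | .inl a, .inr _ => .inl a
  | .inr a, .inl _ => .inr a
  | .inr a, .inr b => if a = b then .inl A.zero else .inr a

variable (A : BCK X)

@[simp] theorem atomsOp_inl_inl (a b : X) :
    atomsOp (Y := Y) A (.inl a) (.inl b) = .inl (A.op a b) := rfl

@[simp] theorem atomsOp_inl_inr (a : X) (b : Y) : atomsOp A (.inl a) (.inr b) = .inl a := rfl

@[simp] theorem atomsOp_inr_inl (a : Y) (b : X) : atomsOp A (.inr a) (.inl b) = .inr a := rfl

@[simp] theorem atomsOp_inr_inr (a b : Y) :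
    atomsOp A (.inr a) (.inr b) = if a = b then .inl A.zero else .inr a := rfl

def adjoinAtoms (Y : Type*) [DecidableEq Y] : BCK (X ⊕ Y) where
  op := atomsOp A
  zero := .inl A.zero
  ax1 x y z := by
    rcases x with a | a <;> rcases y with b | b <;> rcases z with c | c <;>
      simp [A.ax1, op_op_self] <;> split_ifs <;> simp_all
  ax2 x y := by
    rcases x with a | a <;> rcases y with b | b <;> simp [A.ax2]
    split_ifs <;> simp_all
  ax3 x := by
    rcases x with a | a <;> simp
  ax4 x := by
    rcases x with a | a <;> simp
  ax5 x y := by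
    rcases x with a | a <;> rcases y with b | b <;> simp
    case inl.inl => exact A.ax5 a b
    case inr.inr => exact fun h _ => h

theorem nonRigid_adjoinAtoms : nonRigid (A.adjoinAtoms Y) = Sum.inl '' nonRigid A := by
  ext x
  rcases x with a | a
  · rw [Sum.inl_injective.mem_set_image]
    simp [nonRigid, adjoinAtoms, Sum.exists]
  · simp [nonRigid, adjoinAtoms, Sum.exists]

end AdjoinAtoms

def transfer (e : X ≃ Y) (A : BCK X) : BCK Y where
  op x y := e (A.op (e.symm x) (e.symm y))
  zero := e A.zero
  ax1 x y z := by simp [A.ax1]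
  ax2 x y := by simp [A.ax2]
  ax3 x := by simp
  ax4 x := by simp
  ax5 x y h₁ h₂ := e.symm.injective (A.ax5 _ _ (e.injective h₁) (e.injective h₂))

theorem transfer_op_apply (e : X ≃ Y) (A : BCK X) (x y : X) :
    e (A.op x y) = (A.transfer e).op (e x) (e y) := by
  simp [transfer]

def extendEquiv {m n : ℕ} (h : m ≤ n) : Fin m ⊕ Fin (n - m) ≃ Fin n :=
  finSumFinEquiv.trans (finCongr (Nat.add_sub_cancel' h))

def extend {m : ℕ} (A : BCK (Fin m)) {n : ℕ} (h : m ≤ n) : BCK (Fin n) :=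
  (A.adjoinAtoms (Fin (n - m))).transfer (extendEquiv h)

theorem ncard_nonRigid_extend {m n : ℕ} (A : BCK (Fin m)) (h : m ≤ n) :
    (nonRigid (A.extend h)).ncard = (nonRigid A).ncard := by
  rw [extend, ← ncard_nonRigid_congr _ (transfer_op_apply _ _), nonRigid_adjoinAtoms,
    Set.ncard_image_of_injective _ Sum.inl_injective]

theorem _root_.cannotProlong.extend {m n : ℕ} {A : BCK (Fin m)} {x y : Fin m}
    (hA : cannotProlong A x y) (h : m ≤ n) :
    cannotProlong (A.extend h) (extendEquiv h (.inl x)) (extendEquiv h (.inl y)) :=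
  (hA.map (B := A.adjoinAtoms _) (fun _ _ => rfl) Sum.inl_injective).map
    (transfer_op_apply _ _) (extendEquiv h).injective

end BCK

def bckA : BCK (Fin 6) where
  op a b := ![![0, 0, 0, 0, 0, 0], ![1, 0, 0, 0, 0, 0], ![2, 2, 0, 0, 0, 0],
    ![3, 2, 1, 0, 1, 1], ![4, 4, 4, 4, 0, 0], ![5, 4, 4, 4, 1, 0]] a b
  zero := 0
  ax1 := by decide
  ax2 := by decide
  ax3 := by decide
  ax4 := by decide
  ax5 := by decide

def bckB : BCK (Fin 6) where
  op a b := ![![0, 0, 0, 0, 0, 0], ![1, 0, 0, 0, 0, 0], ![2, 1, 0, 0, 0, 0],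
    ![3, 1, 1, 0, 0, 0], ![4, 2, 1, 1, 0, 1], ![5, 3, 2, 1, 1, 0]] a b
  zero := 0
  ax1 := by decide
  ax2 := by decide
  ax3 := by decide
  ax4 := by decide
  ax5 := by decide

-- From `(3, 5)`: `x = 3, 1, 1, 1, 1` and `y = 5, 2, 1, 0`, so `x₄·y₃ = 1·0 ≠ 0`.
theorem cannotProlong_bckA : cannotProlong bckA 3 5 := fun h => absurd (h 3).1 (by decide)

-- From `(4, 5)`: `x = 4, 3, 2, 1` and `y = 5, 2, 2, 2, 2`, so `y₄·x₃ = 2·1 ≠ 0`.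
theorem cannotProlong_bckB : cannotProlong bckB 4 5 := fun h => absurd (h 3).2 (by decide)

theorem ncard_nonRigid_bckA : (BCK.nonRigid bckA).ncard = 2 := by
  have h : BCK.nonRigid bckA = ↑({3, 5} : Finset (Fin 6)) := by
    ext x
    simp only [BCK.nonRigid, Set.mem_ofPred_eq, Finset.mem_coe]
    revert x
    decide
  rw [h, Set.ncard_coe_finset]
  rfl

theorem ncard_nonRigid_bckB : (BCK.nonRigid bckB).ncard = 4 := by
  have h : BCK.nonRigid bckB = ↑({2, 3, 4, 5} : Finset (Fin 6)) := by
    ext x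
    simp only [BCK.nonRigid, Set.mem_ofPred_eq, Finset.mem_coe]
    revert x
    decide
  rw [h, Set.ncard_coe_finset]
  rfl

theorem two_nonisomorphic_BCK_with_nonprolongable_sequences
    (n : ℕ) (hn : 6 ≤ n) :
    ∃ A B : BCK (Fin n),
      (¬ ∃ φ : Fin n ≃ Fin n, ∀ x y : Fin n, φ (A.op x y) = B.op (φ x) (φ y)) ∧
      (∃ x y : Fin n, cannotProlong A x y) ∧
      (∃ x y : Fin n, cannotProlong B x y) := by
  refine ⟨bckA.extend hn, bckB.extend hn, ?_, ⟨_, _, cannotProlong_bckA.extend hn⟩,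
    ⟨_, _, cannotProlong_bckB.extend hn⟩⟩
  rintro ⟨φ, hφ⟩
  have h := BCK.ncard_nonRigid_congr φ hφ
  rw [BCK.ncard_nonRigid_extend, BCK.ncard_nonRigid_extend, ncard_nonRigid_bckA,
    ncard_nonRigid_bckB] at h
  omega
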